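/- arXiv:1408.5851 — 4 statements merged into one kernel-verified Lean document; each statement's English description precedes it below -/
import Mathlib

section
/- Fix n ≥ 3. Let W ⊂ ℂⁿ be a real 3-dimensional subspace. Given any unit vector x ∈ ℂⁿ and any unit vector e orthogonal to both x and Jx (J the complex structure), there exists V in the SU(n)-orbit of W with x ∈ V and e ∈ V. -/
/-!
Normalise a nonzero `w₁ ∈ W`. The real-linear map `v ↦ ⟪w₁, v⟫` from the 3-dimensional `W` to
`ℂ ≅ ℝ²` has a nonzero kernel, which yields a unit `w₂ ∈ W` complex-orthogonal to `w₁`. The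
hypotheses on `e` say precisely that `(x, e)` is also a complex-orthonormal pair. Extending both
pairs to orthonormal bases gives a unitary map with `w₁ ↦ x`, `w₂ ↦ e`; as `n ≥ 3`, multiplying a
third target basis vector by the conjugate of the determinant makes that map special unitary.
-/

open Module Function

section Orthonormal

variable {𝕜 ι E : Type*} [RCLike 𝕜] [NormedAddCommGroup E] [InnerProductSpace 𝕜 E]

theorem Orthonormal.smul_of_norm_eq_one {v : ι → E} (hv : Orthonormal 𝕜 v) {w : ι → 𝕜}
    (hw : ∀ i, ‖w i‖ = 1) : Orthonormal 𝕜 fun i => w i • v i := by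
  refine ⟨fun i => by rw [norm_smul, hw i, hv.norm_eq_one i, one_mul], fun i j hij => ?_⟩
  change inner 𝕜 (w i • v i) (w j • v j) = 0
  rw [inner_smul_left, inner_smul_right, hv.inner_eq_zero hij, mul_zero, mul_zero]

theorem Orthonormal.exists_orthonormalBasis_castLE_eq [FiniteDimensional 𝕜 E] {k : ℕ}
    {v : Fin k → E} (hv : Orthonormal 𝕜 v) (hk : k ≤ finrank 𝕜 E) :
    ∃ b : OrthonormalBasis (Fin (finrank 𝕜 E)) 𝕜 E, ∀ i, b (Fin.castLE hk i) = v i := by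
  let v' : Fin (finrank 𝕜 E) → E := fun j => if h : (j : ℕ) < k then v ⟨j, h⟩ else 0
  have hv' : Orthonormal 𝕜 (({j | (j : ℕ) < k} : Set (Fin (finrank 𝕜 E))).domRestrict v') := by
    let f : ({j | (j : ℕ) < k} : Set (Fin (finrank 𝕜 E))) → Fin k := fun j => ⟨j, j.2⟩
    convert hv.comp f fun i j h => Subtype.ext (Fin.ext (congrArg Fin.val h :)) using 1
    funext j
    exact dif_pos j.2
  obtain ⟨b, hb⟩ := hv'.exists_orthonormalBasis_extension_of_card_eq (by simp)
  exact ⟨b, fun i => by simpa [v'] using hb (Fin.castLE hk i) (by simp)⟩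

end Orthonormal

namespace OrthonormalBasis

variable {𝕜 ι E : Type*} [RCLike 𝕜] [Fintype ι] [DecidableEq ι] [NormedAddCommGroup E]
  [InnerProductSpace 𝕜 E]

theorem exists_coe_eq_update_smul (b : OrthonormalBasis ι 𝕜 E) (k : ι) {μ : 𝕜} (hμ : ‖μ‖ = 1) :
    ∃ b' : OrthonormalBasis ι 𝕜 E, ⇑b' = update b k (μ • b k) := by
  let w : ι → 𝕜 := update 1 k μ
  have hw : ∀ i, ‖w i‖ = 1 := fun i => by
    rcases eq_or_ne i k with rfl | hi
    · simpa [w]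
    · simp [w, hi]
  have hwb : (fun i => w i • b i) = update b k (μ • b k) := by
    funext i
    rcases eq_or_ne i k with rfl | hi
    · simp [w]
    · simp [w, hi]
  have hunit : ∀ i, IsUnit (w i) := fun i => Ne.isUnit (norm_ne_zero_iff.mp (by simp [hw i]))
  have hon : Orthonormal 𝕜 (b.toBasis.isUnitSMul hunit) := by
    convert b.orthonormal.smul_of_norm_eq_one hw using 1
    funext i
    simp [Basis.isUnitSMul_apply]
  refine ⟨(b.toBasis.isUnitSMul hunit).toOrthonormalBasis hon, ?_⟩
  rw [← hwb, Basis.coe_toOrthonormalBasis]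
  funext i
  simp [Basis.isUnitSMul_apply]

theorem det_equiv_refl (a c : OrthonormalBasis ι 𝕜 E) :
    LinearMap.det (a.equiv c (Equiv.refl ι)).toLinearEquiv.toLinearMap = a.toBasis.det c := by
  have := a.toBasis.det_comp (a.equiv c (Equiv.refl ι)).toLinearEquiv.toLinearMap a.toBasis
  rw [Basis.det_self, mul_one] at this
  rw [← this]
  congr 1
  funext i
  simp

theorem exists_det_eq_one_apply_eq_of_ne (a c : OrthonormalBasis ι 𝕜 E) (k : ι) :
    ∃ g : E ≃ₗᵢ[𝕜] E, LinearMap.det g.toLinearEquiv.toLinearMap = 1 ∧ ∀ i ≠ k, g (a i) = c i := by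
  set δ := a.toBasis.det c
  have hδ : ‖starRingEnd 𝕜 δ‖ = 1 := by
    rw [RCLike.norm_conj]
    exact a.det_to_matrix_orthonormalBasis c
  obtain ⟨c', hc'⟩ := c.exists_coe_eq_update_smul k hδ
  refine ⟨a.equiv c' (Equiv.refl ι), ?_, fun i hi => ?_⟩
  · rw [det_equiv_refl, hc', AlternatingMap.map_update_smul, update_eq_self, smul_eq_mul,
      RCLike.conj_mul, ← RCLike.norm_conj, hδ]
    simp
  · simp [hc', hi]

end OrthonormalBasis

section SpecialUnitary

variable {𝕜 E : Type*} [RCLike 𝕜] [NormedAddCommGroup E] [InnerProductSpace 𝕜 E]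
  [FiniteDimensional 𝕜 E]

theorem Orthonormal.exists_linearIsometryEquiv_det_eq_one_apply_eq {k : ℕ} {v w : Fin k → E}
    (hv : Orthonormal 𝕜 v) (hw : Orthonormal 𝕜 w) (hk : k < finrank 𝕜 E) :
    ∃ g : E ≃ₗᵢ[𝕜] E, LinearMap.det g.toLinearEquiv.toLinearMap = 1 ∧ ∀ i, g (v i) = w i := by
  obtain ⟨a, ha⟩ := hv.exists_orthonormalBasis_castLE_eq hk.le
  obtain ⟨c, hc⟩ := hw.exists_orthonormalBasis_castLE_eq hk.le
  obtain ⟨g, hdet, hg⟩ := a.exists_det_eq_one_apply_eq_of_ne c ⟨k, hk⟩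
  exact ⟨g, hdet, fun i => by rw [← ha, ← hc, hg _ (Fin.ne_of_lt i.2)]⟩

end SpecialUnitary

section Complex

variable {E : Type*} [NormedAddCommGroup E] [InnerProductSpace ℂ E]

theorem inner_eq_zero_of_re_inner_eq_zero_of_re_inner_I_smul_eq_zero {x y : E}
    (h : (inner ℂ x y).re = 0) (hI : (inner ℂ (Complex.I • x) y).re = 0) : inner ℂ x y = 0 := by
  rw [inner_smul_left, Complex.conj_I] at hI
  exact Complex.ext h (by simpa using hI)

namespace Submodule

variable (W : Submodule ℝ E)

theorem exists_mem_ne_zero_inner_eq_zero (hW : 3 ≤ finrank ℝ W) (u : E) :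
    ∃ v ∈ W, v ≠ 0 ∧ inner ℂ u v = 0 := by
  have : FiniteDimensional ℝ W := Module.finite_of_finrank_pos (by omega)
  let f : W →ₗ[ℝ] ℂ := ((innerₛₗ ℂ u).restrictScalars ℝ).comp W.subtype
  have hf : LinearMap.ker f ≠ ⊥ :=
    LinearMap.ker_ne_bot_of_finrank_lt (by rw [Complex.finrank_real_complex]; omega)
  obtain ⟨⟨v, hvW⟩, hv, hv0⟩ := exists_mem_ne_zero_of_ne_bot hf
  exact ⟨v, hvW, fun h => hv0 (Subtype.ext h), hv⟩

theorem exists_orthonormal_fin_two_mem (hW : 3 ≤ finrank ℝ W) :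
    ∃ v : Fin 2 → E, Orthonormal ℂ v ∧ ∀ i, v i ∈ W := by
  obtain ⟨u, huW, hu0⟩ := W.exists_mem_ne_zero_of_ne_bot fun h => by
    rw [h, finrank_bot] at hW
    omega
  obtain ⟨v, hvW, hv0, huv⟩ := W.exists_mem_ne_zero_inner_eq_zero hW u
  have normalize_mem {w : E} (hw : w ∈ W) : (‖w‖⁻¹ : ℂ) • w ∈ W := by
    simpa [RCLike.real_smul_eq_coe_smul (K := ℂ)] using W.smul_mem ‖w‖⁻¹ hw
  refine ⟨![(‖u‖⁻¹ : ℂ) • u, (‖v‖⁻¹ : ℂ) • v], ?_, fun i => ?_⟩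
  · simp [norm_smul, hu0, hv0, inner_smul_left, inner_smul_right, huv]
  · fin_cases i
    exacts [normalize_mem huW, normalize_mem hvW]

end Submodule

end Complex

/-- Given a real 3-dimensional subspace `W ⊂ ℂⁿ` (`n ≥ 3`), any unit vector `x`
and any unit vector `e` orthogonal (for the real inner product) to both `x` and
`J x = i x`, there is an element of the `SU(n)`-orbit of `W` containing both
`x` and `e`. -/
theorem su_orbit_of_real_three_plane {n : ℕ} (hn : 3 ≤ n)
    (W : Submodule ℝ (EuclideanSpace ℂ (Fin n)))
    (hW : Module.finrank ℝ W = 3)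
    (x e : EuclideanSpace ℂ (Fin n)) (hx : ‖x‖ = 1) (he : ‖e‖ = 1)
    (hex : ((inner ℂ x e : ℂ)).re = 0)
    (heJx : ((inner ℂ ((Complex.I : ℂ) • x) e : ℂ)).re = 0) :
    ∃ g : EuclideanSpace ℂ (Fin n) ≃ₗᵢ[ℂ] EuclideanSpace ℂ (Fin n),
      LinearMap.det (g.toLinearEquiv.toLinearMap) = 1 ∧
      x ∈ W.map ((g.toLinearEquiv.toLinearMap).restrictScalars ℝ) ∧
      e ∈ W.map ((g.toLinearEquiv.toLinearMap).restrictScalars ℝ) := by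
  have hxe : inner ℂ x e = 0 :=
    inner_eq_zero_of_re_inner_eq_zero_of_re_inner_I_smul_eq_zero hex heJx
  have hxe_on : Orthonormal ℂ ![x, e] := by simp [hx, he, hxe]
  obtain ⟨w, hw_on, hwW⟩ := W.exists_orthonormal_fin_two_mem hW.ge
  have hdim : 2 < finrank ℂ (EuclideanSpace ℂ (Fin n)) := by
    rw [finrank_euclideanSpace_fin]
    omega
  obtain ⟨g, hdet, hg⟩ := hw_on.exists_linearIsometryEquiv_det_eq_one_apply_eq hxe_on hdim
  exact ⟨g, hdet, ⟨w 0, hwW 0, hg 0⟩, ⟨w 1, hwW 1, hg 1⟩⟩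
end

section
/- Let F ⊂ Sym²(ℝⁿ) be a closed set that is a cone (tF = F for t ≥ 0), satisfies positivity (F + P ⊂ F where P = {A ≥ 0}), is O(n)-invariant, and has Riesz characteristic p, meaning p = sup{ t ≥ 1 : P_{e⊥} − (t−1)P_e ∈ F } for a (hence any) unit vector e, with p finite. Then F^{min/2}_p ⊂ F ⊂ F^{min/max}_p, where F^{min/2}_p = { A : λ_min(A) + (p−1)λ₂(A) ≥ 0 } and F^{min/max}_p = { A : λ_min(A) + (p−1)λ_max(A) ≥ 0 }, with λ₁(A) ≤ λ₂(A) ≤ … ≤ λₙ(A) the ordered eigenvalues. -/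
open Matrix

/-- The `i`-th smallest eigenvalue (with multiplicity) of a real symmetric
matrix. -/
noncomputable def sortedEigenvalues {n : ℕ} {A : Matrix (Fin n) (Fin n) ℝ}
    (hA : A.IsHermitian) : Fin n → ℝ :=
  fun i => hA.eigenvalues (Tuple.sort hA.eigenvalues i)

/-!
By O(n)-invariance, whether a symmetric matrix lies in `F` depends only on its eigenvalues, so
it suffices to look at diagonal matrices, and positivity makes membership of `diagonal μ`
monotone in `μ`. Write `Tₜ = I - t e₁e₁ᵀ` for the test matrices of the Riesz characteristic.

If `λ₁ + (p - 1) λ₂ ≥ 0`, then `λ₂ ≥ 0` and `diagonal λ ≥ λ₂ Tₚ`, so `diagonal λ ∈ F`.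
Conversely, if `diagonal λ ∈ F` and `s > 0` bounds every eigenvalue, then `diagonal λ ≤ s Tₜ`
with `t = 1 - λ₁ / s`, hence `Tₜ ∈ F`, `t ≤ p`, i.e. `λ₁ + (p - 1) s ≥ 0`. Take `s = λₙ` when
`λₙ > 0`; when `λₙ ≤ 0` and `λ₁ < 0`, the choice `s = -λ₁ / p` gives a contradiction.
-/

def HasRieszCharacteristic {ι : Type*} [Fintype ι] [DecidableEq ι] (F : Set (Matrix ι ι ℝ))
    (p : ℝ) : Prop :=
  ∀ e : ι → ℝ, (∑ i, e i * e i) = 1 → ∀ t : ℝ, 1 ≤ t →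
    (((1 : Matrix ι ι ℝ) - vecMulVec e e) - (t - 1) • vecMulVec e e ∈ F ↔ t ≤ p)

namespace Tuple

variable {n : ℕ} {α : Type*} [LinearOrder α] (f : Fin n → α)

lemma apply_sort_one_le_of_ne_sort_zero (h0 : 0 < n) (h1 : 1 < n) {i : Fin n}
    (hi : i ≠ sort f ⟨0, h0⟩) : f (sort f ⟨1, h1⟩) ≤ f i := by
  have h : (⟨1, h1⟩ : Fin n) ≤ (sort f).symm i := by
    by_contra! h
    refine hi ((sort f).symm_apply_eq.1 (Fin.ext ?_))
    rw [Fin.lt_def] at h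
    simp only at h ⊢
    omega
  simpa using monotone_sort f h

lemma apply_le_apply_sort_sub_one (h : n - 1 < n) (i : Fin n) :
    f i ≤ f (sort f ⟨n - 1, h⟩) := by
  have h : (sort f).symm i ≤ ⟨n - 1, h⟩ := by
    rw [Fin.le_def]
    have := ((sort f).symm i).isLt
    simp only
    omega
  simpa using monotone_sort f h

end Tuple

lemma diagonal_mem_of_le {ι : Type*} [DecidableEq ι] {F : Set (Matrix ι ι ℝ)}
    (hFpos : ∀ A ∈ F, ∀ P : Matrix ι ι ℝ, P.PosSemidef → A + P ∈ F)
    {d d' : ι → ℝ} (hd : diagonal d ∈ F) (h : d ≤ d') : diagonal d' ∈ F := by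
  simpa using hFpos _ hd (diagonal (d' - d)) (posSemidef_diagonal_iff.2 fun i => sub_nonneg.2 (h i))

section

variable {ι : Type*} [Fintype ι] [DecidableEq ι] {F : Set (Matrix ι ι ℝ)}

lemma unitary_conj_mem_iff
    (hFinv : ∀ g : Matrix ι ι ℝ, g * gᵀ = 1 → ∀ A ∈ F, g * A * gᵀ ∈ F)
    (u : unitary (Matrix ι ι ℝ)) (A : Matrix ι ι ℝ) :
    (u : Matrix ι ι ℝ) * A * star (u : Matrix ι ι ℝ) ∈ F ↔ A ∈ F := by
  have hstar : star (u : Matrix ι ι ℝ) = (u : Matrix ι ι ℝ)ᵀ :=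
    conjTranspose_eq_transpose_of_trivial _
  have hu : (u : Matrix ι ι ℝ) * (u : Matrix ι ι ℝ)ᵀ = 1 := by
    rw [← hstar, Unitary.mul_star_self_of_mem u.prop]
  have hu' : (u : Matrix ι ι ℝ)ᵀ * (u : Matrix ι ι ℝ) = 1 := by
    rw [← hstar, Unitary.star_mul_self_of_mem u.prop]
  rw [hstar]
  refine ⟨fun h => ?_, hFinv _ hu A⟩
  have h' := hFinv _ (by rwa [transpose_transpose]) _ h
  rwa [transpose_transpose, ← Matrix.mul_assoc, ← Matrix.mul_assoc, hu', Matrix.one_mul,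
    Matrix.mul_assoc, hu', Matrix.mul_one] at h'

lemma mem_iff_diagonal_eigenvalues_mem
    (hFinv : ∀ g : Matrix ι ι ℝ, g * gᵀ = 1 → ∀ A ∈ F, g * A * gᵀ ∈ F)
    {A : Matrix ι ι ℝ} (hA : A.IsHermitian) :
    A ∈ F ↔ diagonal hA.eigenvalues ∈ F := by
  conv_lhs => rw [hA.spectral_theorem, Unitary.conjStarAlgAut_apply, unitary_conj_mem_iff hFinv]
  simp

lemma HasRieszCharacteristic.diagonal_one_sub_smul_single_mem_iff {p : ℝ}
    (hchar : HasRieszCharacteristic F p) (i : ι) {t : ℝ} (ht : 1 ≤ t) :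
    diagonal (1 - t • Pi.single i 1) ∈ F ↔ t ≤ p := by
  convert hchar (Pi.single i 1) (by simp [Pi.single_apply]) t ht using 2
  rw [← single_eq_single_vecMulVec_single, ← diagonal_single]
  ext j k
  rcases eq_or_ne j k with rfl | hjk
  · by_cases hj : j = i <;> simp [hj]
  · simp [hjk]

lemma diagonal_mem_of_nonneg_add_sub_one_mul
    (hFcone : ∀ t : ℝ, 0 ≤ t → ∀ A ∈ F, t • A ∈ F)
    (hFpos : ∀ A ∈ F, ∀ P : Matrix ι ι ℝ, P.PosSemidef → A + P ∈ F)
    {p : ℝ} (hp : 1 ≤ p) (hchar : HasRieszCharacteristic F p)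
    {μ : ι → ℝ} {i : ι} {m : ℝ} (hi : μ i ≤ m) (hm : ∀ j ≠ i, m ≤ μ j)
    (h : 0 ≤ μ i + (p - 1) * m) :
    diagonal μ ∈ F := by
  have hm0 : 0 ≤ m := by nlinarith
  have htest := (hchar.diagonal_one_sub_smul_single_mem_iff i hp).2 le_rfl
  refine diagonal_mem_of_le hFpos (d := m • (1 - p • Pi.single i 1))
    (by simpa using hFcone m hm0 _ htest) fun j => ?_
  by_cases hj : j = i
  · subst hj
    simp only [Pi.smul_apply, Pi.sub_apply, Pi.one_apply, Pi.single_eq_same, smul_eq_mul,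
      mul_one]
    linarith
  · simpa [hj] using hm j hj

lemma nonneg_add_sub_one_mul_of_diagonal_mem_of_pos
    (hFcone : ∀ t : ℝ, 0 ≤ t → ∀ A ∈ F, t • A ∈ F)
    (hFpos : ∀ A ∈ F, ∀ P : Matrix ι ι ℝ, P.PosSemidef → A + P ∈ F)
    {p : ℝ} (hchar : HasRieszCharacteristic F p)
    {μ : ι → ℝ} {i : ι} {s : ℝ} (hs : 0 < s) (hle : ∀ j, μ j ≤ s) (hi : μ i ≤ 0)
    (hmem : diagonal μ ∈ F) :
    0 ≤ μ i + (p - 1) * s := by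
  have ht : 1 ≤ 1 - μ i / s := by
    have := div_nonpos_of_nonpos_of_nonneg hi hs.le
    linarith
  have hdom : diagonal (s • (1 - (1 - μ i / s) • Pi.single i 1)) ∈ F := by
    refine diagonal_mem_of_le hFpos hmem fun j => ?_
    by_cases hj : j = i
    · subst hj
      simp [mul_div_cancel₀ _ hs.ne']
    · simpa [hj] using hle j
  have htp : 1 - μ i / s ≤ p := by
    refine (hchar.diagonal_one_sub_smul_single_mem_iff i ht).1 ?_
    simpa [← diagonal_smul, smul_smul, hs.ne'] using hFcone s⁻¹ (inv_nonneg.2 hs.le) _ hdom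
  have hquot : -μ i / s ≤ p - 1 := by
    rw [neg_div]
    linarith
  rw [div_le_iff₀ hs] at hquot
  linarith

lemma nonneg_add_sub_one_mul_of_diagonal_mem
    (hFcone : ∀ t : ℝ, 0 ≤ t → ∀ A ∈ F, t • A ∈ F)
    (hFpos : ∀ A ∈ F, ∀ P : Matrix ι ι ℝ, P.PosSemidef → A + P ∈ F)
    {p : ℝ} (hp : 1 ≤ p) (hchar : HasRieszCharacteristic F p)
    {μ : ι → ℝ} {i : ι} {M : ℝ} (hle : ∀ j, μ j ≤ M) (hmem : diagonal μ ∈ F) :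
    0 ≤ μ i + (p - 1) * M := by
  rcases le_or_gt 0 (μ i) with hi | hi
  · nlinarith [hle i]
  rcases lt_or_ge 0 M with hM | hM
  · exact nonneg_add_sub_one_mul_of_diagonal_mem_of_pos hFcone hFpos hchar hM hle hi.le hmem
  have hp0 : 0 < p := by linarith
  have hs : 0 < -μ i / p := div_pos (neg_pos.2 hi) hp0
  have hbound := nonneg_add_sub_one_mul_of_diagonal_mem_of_pos hFcone hFpos hchar hs
    (fun j => (hle j).trans (hM.trans hs.le)) hi.le hmem
  have hcalc : μ i + (p - 1) * (-μ i / p) = μ i / p := by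
    field_simp
    ring
  linarith [div_neg_of_neg_of_pos hi hp0]

end

/-- Every O(n)-invariant cone subequation `F` with finite Riesz characteristic
`p` is sandwiched between `F^{min/2}_p = {λ₁ + (p-1) λ₂ ≥ 0}` and
`F^{min/max}_p = {λ₁ + (p-1) λₙ ≥ 0}`. -/
theorem cone_subequation_sandwich {n : ℕ} (hn : 2 ≤ n)
    (F : Set (Matrix (Fin n) (Fin n) ℝ))
    (hFcone : ∀ t : ℝ, 0 ≤ t → ∀ A ∈ F, t • A ∈ F)
    (hFpos : ∀ A ∈ F, ∀ P : Matrix (Fin n) (Fin n) ℝ, P.PosSemidef → A + P ∈ F)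
    (hFinv : ∀ g : Matrix (Fin n) (Fin n) ℝ, g * gᵀ = 1 → ∀ A ∈ F, g * A * gᵀ ∈ F)
    (p : ℝ) (hp : 1 ≤ p)
    (hchar : ∀ e : Fin n → ℝ, (∑ i, e i * e i) = 1 → ∀ t : ℝ, 1 ≤ t →
      (((1 : Matrix (Fin n) (Fin n) ℝ) - Matrix.vecMulVec e e)
          - (t - 1) • Matrix.vecMulVec e e ∈ F ↔ t ≤ p)) :
    (∀ (A : Matrix (Fin n) (Fin n) ℝ) (hA : A.IsHermitian),
        0 ≤ sortedEigenvalues hA ⟨0, by omega⟩ +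
              (p - 1) * sortedEigenvalues hA ⟨1, by omega⟩ → A ∈ F) ∧
    (∀ (A : Matrix (Fin n) (Fin n) ℝ) (hA : A.IsHermitian), A ∈ F →
        0 ≤ sortedEigenvalues hA ⟨0, by omega⟩ +
              (p - 1) * sortedEigenvalues hA ⟨n - 1, by omega⟩) := by
  refine ⟨fun A hA h => ?_, fun A hA hAF => ?_⟩
  · rw [mem_iff_diagonal_eigenvalues_mem hFinv hA]
    exact diagonal_mem_of_nonneg_add_sub_one_mul hFcone hFpos hp hchar
      (i := Tuple.sort hA.eigenvalues ⟨0, by omega⟩)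
      (Tuple.monotone_sort hA.eigenvalues (Fin.mk_le_mk.2 zero_le_one))
      (fun j hj => Tuple.apply_sort_one_le_of_ne_sort_zero _ _ _ hj) h
  · rw [mem_iff_diagonal_eigenvalues_mem hFinv hA] at hAF
    exact nonneg_add_sub_one_mul_of_diagonal_mem hFcone hFpos hp hchar
      (i := Tuple.sort hA.eigenvalues ⟨0, by omega⟩)
      (Tuple.apply_le_apply_sort_sub_one hA.eigenvalues (by omega)) hAF
end

section
/- For 1 ≤ p < ∞, the dual of the subequation F^{min/max}_p = { A ∈ Sym²(ℝⁿ) : λ_min(A) + (p−1)λ_max(A) ≥ 0 } is F^{min/max}_q where (p−1)(q−1) = 1; here the dual of F is F̃ = { A : −A ∉ Int F } = −(∁ Int F). -/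
open Matrix

/-- The space `Sym²(ℝⁿ)` of real symmetric `n × n` matrices. -/
abbrev SymMat (n : ℕ) := {A : Matrix (Fin n) (Fin n) ℝ // A.IsHermitian}

/-- The subequation `F^{min/max}_p = {A : λ_min(A) + (p-1) λ_max(A) ≥ 0}`. -/
noncomputable def Fminmax (n : ℕ) (p : ℝ) : Set (SymMat n) :=
  {A : SymMat n |
    0 ≤ (⨅ i, A.2.eigenvalues i) + (p - 1) * (⨆ i, A.2.eigenvalues i)}

open Topology

/-!
Both extreme eigenvalues are governed by the Rayleigh quotient: `c ≤ λ_min(A)` iff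
`c ‖x‖² ≤ xᵀAx` for all `x`, and `λ_max(A) ≤ c` iff `xᵀAx ≤ c ‖x‖²` for all `x`. Hence
`λ_min(-A) = -λ_max(A)`, subtracting `t • 1` lowers both by `t`, and both are Lipschitz in the
entries of `A`. Continuity makes `{λ_min + (p-1) λ_max > 0}` open, while subtracting `t • 1`
lowers `λ_min + (p-1) λ_max` by `p t`, so this strict set is exactly the interior of `F_p`.
Therefore `A ∈ F̃_p` iff `λ_max(A) + (p-1) λ_min(A) ≥ 0`, and multiplying the defining
inequality of `F_q` by `p - 1 > 0` turns it into this one.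
-/

namespace Matrix

lemma dotProduct_sub_smul_one_mulVec {ι : Type*} [Fintype ι] [DecidableEq ι]
    (A : Matrix ι ι ℝ) (t : ℝ) (x : ι → ℝ) :
    x ⬝ᵥ ((A - t • 1) *ᵥ x) = x ⬝ᵥ (A *ᵥ x) - t * (x ⬝ᵥ x) := by
  rw [sub_mulVec, dotProduct_sub, smul_mulVec, one_mulVec, dotProduct_smul, smul_eq_mul]

lemma abs_dotProduct_mulVec_self_le {ι : Type*} [Fintype ι] (E : Matrix ι ι ℝ)
    (x : ι → ℝ) : |x ⬝ᵥ (E *ᵥ x)| ≤ (∑ i, ∑ j, |E i j|) * (x ⬝ᵥ x) := by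
  have hcoord : ∀ i, x i ^ 2 ≤ x ⬝ᵥ x := fun i => by
    simpa [dotProduct, sq] using
      Finset.single_le_sum (fun k _ => mul_self_nonneg (x k)) (Finset.mem_univ i)
  have hprod : ∀ i j, |x i| * |x j| ≤ x ⬝ᵥ x := fun i j => by
    nlinarith [sq_abs (x i), sq_abs (x j), sq_nonneg (|x i| - |x j|), hcoord i, hcoord j]
  calc |x ⬝ᵥ (E *ᵥ x)| = |∑ i, ∑ j, x i * E i j * x j| := by
        simp only [dotProduct, mulVec, Finset.mul_sum, mul_assoc]
    _ ≤ ∑ i, ∑ j, |x i * E i j * x j| :=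
        (Finset.abs_sum_le_sum_abs _ _).trans
          (Finset.sum_le_sum fun i _ => Finset.abs_sum_le_sum_abs _ _)
    _ ≤ ∑ i, ∑ j, |E i j| * (x ⬝ᵥ x) := by
        gcongr with i _ j _
        rw [abs_mul, abs_mul, mul_right_comm, mul_comm]
        exact mul_le_mul_of_nonneg_left (hprod i j) (abs_nonneg _)
    _ = (∑ i, ∑ j, |E i j|) * (x ⬝ᵥ x) := by simp only [Finset.sum_mul]

end Matrix

namespace Matrix.IsHermitian

variable {ι : Type*} [Fintype ι] [DecidableEq ι] {A B : Matrix ι ι ℝ}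

lemma dotProduct_self_eq_sum_sq (hA : A.IsHermitian) (x : ι → ℝ) :
    x ⬝ᵥ x = ∑ j, (⇑(hA.eigenvectorBasis j) ⬝ᵥ x) ^ 2 := by
  have := hA.eigenvectorBasis.sum_inner_mul_inner (WithLp.toLp 2 x) (WithLp.toLp 2 x)
  simp only [EuclideanSpace.inner_eq_star_dotProduct, star_trivial] at this
  simp [← this, sq, dotProduct_comm]

lemma dotProduct_mulVec_self_eq_sum (hA : A.IsHermitian) (x : ι → ℝ) :
    x ⬝ᵥ (A *ᵥ x) = ∑ j, hA.eigenvalues j * (⇑(hA.eigenvectorBasis j) ⬝ᵥ x) ^ 2 := by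
  have := hA.eigenvectorBasis.sum_inner_mul_inner (WithLp.toLp 2 x) (WithLp.toLp 2 (A *ᵥ x))
  simp only [EuclideanSpace.inner_eq_star_dotProduct, star_trivial] at this
  rw [dotProduct_comm, ← this]
  refine Finset.sum_congr rfl fun j _ => ?_
  have hsymm : (A *ᵥ x) ⬝ᵥ ⇑(hA.eigenvectorBasis j) =
      hA.eigenvalues j * (⇑(hA.eigenvectorBasis j) ⬝ᵥ x) := by
    rw [dotProduct_comm, dotProduct_mulVec, ← mulVec_transpose,
      ← conjTranspose_eq_transpose_of_trivial, hA.eq, mulVec_eigenvectorBasis,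
      smul_dotProduct, smul_eq_mul]
  simp only [hsymm]
  ring

lemma dotProduct_eigenvectorBasis_self (hA : A.IsHermitian) (i : ι) :
    ⇑(hA.eigenvectorBasis i) ⬝ᵥ ⇑(hA.eigenvectorBasis i) = 1 := by
  have := hA.eigenvectorBasis.inner_eq_one i
  rwa [EuclideanSpace.inner_eq_star_dotProduct, star_trivial] at this

lemma le_iInf_eigenvalues_iff [Nonempty ι] (hA : A.IsHermitian) {c : ℝ} :
    c ≤ ⨅ i, hA.eigenvalues i ↔ ∀ x, c * (x ⬝ᵥ x) ≤ x ⬝ᵥ (A *ᵥ x) := by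
  refine ⟨fun hc x => ?_, fun h => le_ciInf fun i => ?_⟩
  · rw [hA.dotProduct_self_eq_sum_sq, hA.dotProduct_mulVec_self_eq_sum, Finset.mul_sum]
    gcongr with j
    exact hc.trans (ciInf_le (Set.finite_range _).bddBelow j)
  · simpa [mulVec_eigenvectorBasis, dotProduct_eigenvectorBasis_self] using
      h (hA.eigenvectorBasis i)

lemma iSup_eigenvalues_le_iff [Nonempty ι] (hA : A.IsHermitian) {c : ℝ} :
    ⨆ i, hA.eigenvalues i ≤ c ↔ ∀ x, x ⬝ᵥ (A *ᵥ x) ≤ c * (x ⬝ᵥ x) := by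
  refine ⟨fun hc x => ?_, fun h => ciSup_le fun i => ?_⟩
  · rw [hA.dotProduct_self_eq_sum_sq, hA.dotProduct_mulVec_self_eq_sum, Finset.mul_sum]
    gcongr with j
    exact (le_ciSup (Set.finite_range _).bddAbove j).trans hc
  · simpa [mulVec_eigenvectorBasis, dotProduct_eigenvectorBasis_self] using
      h (hA.eigenvectorBasis i)

lemma iInf_eigenvalues_neg [Nonempty ι] (hA : A.IsHermitian) :
    ⨅ i, hA.neg.eigenvalues i = -⨆ i, hA.eigenvalues i := by
  refine eq_of_forall_le_iff fun c => ?_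
  rw [le_iInf_eigenvalues_iff, le_neg, iSup_eigenvalues_le_iff]
  refine forall_congr' fun x => ?_
  rw [neg_mulVec, dotProduct_neg, neg_mul, le_neg]

lemma iSup_eigenvalues_neg [Nonempty ι] (hA : A.IsHermitian) :
    ⨆ i, hA.neg.eigenvalues i = -⨅ i, hA.eigenvalues i := by
  refine eq_of_forall_ge_iff fun c => ?_
  rw [iSup_eigenvalues_le_iff, neg_le, le_iInf_eigenvalues_iff]
  refine forall_congr' fun x => ?_
  rw [neg_mulVec, dotProduct_neg, neg_mul, neg_le]

lemma iInf_eigenvalues_sub_smul_one [Nonempty ι] (hA : A.IsHermitian) (t : ℝ)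
    (hB : (A - t • 1).IsHermitian) :
    ⨅ i, hB.eigenvalues i = (⨅ i, hA.eigenvalues i) - t := by
  refine eq_of_forall_le_iff fun c => ?_
  rw [le_iInf_eigenvalues_iff, le_sub_iff_add_le, le_iInf_eigenvalues_iff]
  refine forall_congr' fun x => ?_
  rw [dotProduct_sub_smul_one_mulVec, le_sub_iff_add_le, add_mul]

lemma iSup_eigenvalues_sub_smul_one [Nonempty ι] (hA : A.IsHermitian) (t : ℝ)
    (hB : (A - t • 1).IsHermitian) :
    ⨆ i, hB.eigenvalues i = (⨆ i, hA.eigenvalues i) - t := by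
  refine eq_of_forall_ge_iff fun c => ?_
  rw [iSup_eigenvalues_le_iff, sub_le_iff_le_add, iSup_eigenvalues_le_iff]
  refine forall_congr' fun x => ?_
  rw [dotProduct_sub_smul_one_mulVec, sub_le_iff_le_add, add_mul]

lemma abs_iInf_eigenvalues_sub_le [Nonempty ι] (hA : A.IsHermitian) (hB : B.IsHermitian) :
    |(⨅ i, hB.eigenvalues i) - ⨅ i, hA.eigenvalues i| ≤ ∑ i, ∑ j, |B i j - A i j| := by
  suffices h : ∀ {A B : Matrix ι ι ℝ} (hA : A.IsHermitian) (hB : B.IsHermitian),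
      (⨅ i, hA.eigenvalues i) - ∑ i, ∑ j, |B i j - A i j| ≤ ⨅ i, hB.eigenvalues i by
    have hsymm : ∑ i, ∑ j, |A i j - B i j| = ∑ i, ∑ j, |B i j - A i j| :=
      Finset.sum_congr rfl fun i _ => Finset.sum_congr rfl fun j _ => abs_sub_comm _ _
    rw [abs_sub_le_iff]
    constructor <;> linarith [h hA hB, h hB hA]
  intro A B hA hB
  refine hB.le_iInf_eigenvalues_iff.2 fun x => ?_
  have hAx := hA.le_iInf_eigenvalues_iff.1 le_rfl x
  have hE := (abs_le.1 (abs_dotProduct_mulVec_self_le (B - A) x)).1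
  simp only [sub_mulVec, dotProduct_sub, sub_apply] at hE
  linarith

lemma abs_iSup_eigenvalues_sub_le [Nonempty ι] (hA : A.IsHermitian) (hB : B.IsHermitian) :
    |(⨆ i, hB.eigenvalues i) - ⨆ i, hA.eigenvalues i| ≤ ∑ i, ∑ j, |B i j - A i j| := by
  have h := abs_iInf_eigenvalues_sub_le hB.neg hA.neg
  rw [iInf_eigenvalues_neg hB, iInf_eigenvalues_neg hA] at h
  simpa only [neg_apply, neg_sub_neg] using h

end Matrix.IsHermitian

lemma continuous_of_abs_sub_le_sum_abs_sub {X ι : Type*} [TopologicalSpace X] [Fintype ι]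
    {g : X → Matrix ι ι ℝ} (hg : Continuous g) {f : X → ℝ}
    (hf : ∀ x y, |f y - f x| ≤ ∑ i, ∑ j, |g y i j - g x i j|) : Continuous f := by
  refine continuous_iff_continuousAt.2 fun x => Metric.tendsto_nhds.2 fun ε hε => ?_
  have hd : Continuous fun y => ∑ i, ∑ j, |g y i j - g x i j| :=
    continuous_finsetSum _ fun i _ => continuous_finsetSum _ fun j _ =>
      ((hg.matrix_elem i j).sub continuous_const).abs
  filter_upwards [hd.continuousAt.eventually (gt_mem_nhds (by simpa using hε))] with y hy
  exact (hf x y).trans_lt hy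

section

variable {ι : Type*} [Fintype ι] [DecidableEq ι] [Nonempty ι]

lemma continuous_iInf_eigenvalues :
    Continuous fun A : {A : Matrix ι ι ℝ // A.IsHermitian} => ⨅ i, A.2.eigenvalues i :=
  continuous_of_abs_sub_le_sum_abs_sub continuous_subtype_val
    fun A B => A.2.abs_iInf_eigenvalues_sub_le B.2

lemma continuous_iSup_eigenvalues :
    Continuous fun A : {A : Matrix ι ι ℝ // A.IsHermitian} => ⨆ i, A.2.eigenvalues i :=
  continuous_of_abs_sub_le_sum_abs_sub continuous_subtype_val
    fun A B => A.2.abs_iSup_eigenvalues_sub_le B.2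

end

lemma exists_pos_mem_of_mem_interior {X : Type*} [TopologicalSpace X] {s : Set X}
    {φ : ℝ → X} (hφ : ContinuousAt φ 0) (h : φ 0 ∈ interior s) : ∃ t > 0, φ t ∈ s := by
  obtain ⟨t, ht, ht0⟩ := Filter.nonempty_of_mem <| Filter.inter_mem
    (nhdsWithin_le_nhds (hφ.preimage_mem_nhds (isOpen_interior.mem_nhds h)))
    (self_mem_nhdsWithin (s := Set.Ioi 0))
  exact ⟨t, ht0, interior_subset ht⟩

theorem interior_Fminmax {n : ℕ} (hn : 1 ≤ n) {p : ℝ} (hp : 0 < p) :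
    interior (Fminmax n p) =
      {A | 0 < (⨅ i, A.2.eigenvalues i) + (p - 1) * ⨆ i, A.2.eigenvalues i} := by
  have : Nonempty (Fin n) := ⟨⟨0, hn⟩⟩
  refine subset_antisymm (fun A hA => ?_)
    (interior_maximal (Set.ofPred_subset_ofPred.2 fun _ => le_of_lt) ?_)
  · let shift : ℝ → SymMat n := fun t => ⟨A.1 - t • 1, A.2.sub (isHermitian_one.smul rfl)⟩
    have hshift0 : shift 0 = A := Subtype.ext (by simp [shift])
    obtain ⟨t, ht, hmem⟩ := exists_pos_mem_of_mem_interior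
      (φ := shift) (by fun_prop) (hshift0 ▸ hA)
    simp only [shift, Fminmax, Set.mem_ofPred, A.2.iInf_eigenvalues_sub_smul_one,
      A.2.iSup_eigenvalues_sub_smul_one] at hmem
    rw [Set.mem_ofPred]
    nlinarith
  · exact isOpen_lt continuous_const
      (continuous_iInf_eigenvalues.add (continuous_const.mul continuous_iSup_eigenvalues))

/-- The dual of `F^{min/max}_p` is `F^{min/max}_q` where `(p-1)(q-1) = 1`;
the dual of `F` is `F̃ = {A : -A ∉ Int F}`. -/
theorem dual_of_Fminmax {n : ℕ} (hn : 1 ≤ n) (p q : ℝ) (hp : 1 < p)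
    (hq : (p - 1) * (q - 1) = 1) :
    {A : SymMat n | (⟨-A.1, A.2.neg⟩ : SymMat n) ∉ interior (Fminmax n p)} =
      Fminmax n q := by
  have : Nonempty (Fin n) := ⟨⟨0, hn⟩⟩
  ext A
  set a := ⨅ i, A.2.eigenvalues i
  set b := ⨆ i, A.2.eigenvalues i
  have hdual : -b + (p - 1) * -a ≤ 0 ↔ 0 ≤ a + (q - 1) * b := by
    have hscale : (p - 1) * (a + (q - 1) * b) = (p - 1) * a + b := by linear_combination b * hq
    rw [← mul_nonneg_iff_of_pos_left (sub_pos.2 hp), hscale]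
    constructor <;> intro h <;> linarith
  rw [interior_Fminmax hn (by linarith)]
  simp only [Set.mem_ofPred, not_lt, Fminmax, A.2.iInf_eigenvalues_neg,
    A.2.iSup_eigenvalues_neg]
  exact hdual
end

section
/- Let F ⊂ Sym²(ℝⁿ) be a cone subequation with Riesz characteristic p (i.e. P_{e⊥} − (t−1)P_e ∈ F iff t ≤ p, for unit vectors e). For δ ≥ 0 set r = 1 + δ and F(δ) = Φ_r(F) where Φ_r(A) = rA + (1−r)(tr A)(1/n)I. Then F(δ) has Riesz characteristic p_{F(δ)} = n(1+δ)p / (n + δp). Concretely: Φ_r(P_{e⊥} − (p−1)P_e) is a positive multiple of P_{e⊥} − (p′−1)P_e with p′ = n(1+δ)p/(n+δp). -/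
/-!
On the plane of matrices `a • 1 + b • P_e` (`e` a unit vector, `P_e = vecMulVec e e`) the map
`Φ_r` acts by `(a, b) ↦ (a + (1 - r) b / n, r b)`, and `Φ_{1/r}` inverts it. Since `F` is a cone
stable under adding positive semidefinite matrices, its Riesz characteristic decides membership
on the whole half-plane `b < 0`: `a • 1 + b • P_e ∈ F ↔ -b ≤ a p`. Hence
`1 - t P_e ∈ Φ_r(F) ↔ Φ_{1/r}(1 - t P_e) ∈ F` unwinds to a linear inequality in `t`.
-/

open Matrix

/-- The map `Φ_r(A) = r A + (1-r) (tr A) (1/n) I` on `n × n` matrices. -/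
noncomputable def PhiHomothety (n : ℕ) (r : ℝ) (A : Matrix (Fin n) (Fin n) ℝ) :
    Matrix (Fin n) (Fin n) ℝ :=
  r • A + ((1 - r) * (A.trace / (n : ℝ))) • (1 : Matrix (Fin n) (Fin n) ℝ)

variable {ι : Type*}

lemma smul_mem_iff_of_pos {F : Set (Matrix ι ι ℝ)}
    (hFcone : ∀ t : ℝ, 0 ≤ t → ∀ A ∈ F, t • A ∈ F) {a : ℝ} (ha : 0 < a) (A : Matrix ι ι ℝ) :
    a • A ∈ F ↔ A ∈ F := by
  refine ⟨fun h => ?_, hFcone a ha.le A⟩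
  simpa [smul_smul, ha.ne'] using hFcone a⁻¹ (inv_nonneg.2 ha.le) _ h

variable [DecidableEq ι]

lemma one_sub_vecMulVec_sub_smul (e : ι → ℝ) (t : ℝ) :
    ((1 : Matrix ι ι ℝ) - vecMulVec e e) - (t - 1) • vecMulVec e e = 1 - t • vecMulVec e e := by
  module

variable [Fintype ι]

def IsRieszCharacteristic (F : Set (Matrix ι ι ℝ)) (p : ℝ) : Prop :=
  ∀ e : ι → ℝ, (∑ i, e i * e i) = 1 → ∀ t : ℝ, 1 ≤ t →
    (((1 : Matrix ι ι ℝ) - vecMulVec e e) - (t - 1) • vecMulVec e e ∈ F ↔ t ≤ p)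

namespace IsRieszCharacteristic

variable {F : Set (Matrix ι ι ℝ)} {p : ℝ} (hF : IsRieszCharacteristic F p) (hp : 1 ≤ p)
  (hFcone : ∀ t : ℝ, 0 ≤ t → ∀ A ∈ F, t • A ∈ F)
  (hFpos : ∀ A ∈ F, ∀ P : Matrix ι ι ℝ, P.PosSemidef → A + P ∈ F)
  {e : ι → ℝ} (he : (∑ i, e i * e i) = 1)
include hF hp hFpos he

lemma one_sub_smul_mem_iff (s : ℝ) : 1 - s • vecMulVec e e ∈ F ↔ s ≤ p := by
  rcases le_or_gt 1 s with hs | hs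
  · rw [← hF e he s hs, one_sub_vecMulVec_sub_smul]
  · have hmem := hFpos _ ((hF e he 1 le_rfl).2 hp) _
      ((posSemidef_vecMulVec_self_star e).smul (sub_nonneg.2 hs.le))
    rw [one_sub_vecMulVec_sub_smul] at hmem
    refine iff_of_true ?_ (by linarith)
    convert hmem using 1
    module

include hFcone

lemma smul_one_add_smul_mem_iff_of_pos {a : ℝ} (ha : 0 < a) (b : ℝ) :
    a • (1 : Matrix ι ι ℝ) + b • vecMulVec e e ∈ F ↔ -b ≤ a * p := by
  have hscale : a • (1 : Matrix ι ι ℝ) + b • vecMulVec e e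
      = a • (1 - (-b / a) • vecMulVec e e) := by
    rw [smul_sub, smul_smul, mul_div_cancel₀ _ ha.ne']
    module
  rw [hscale, smul_mem_iff_of_pos hFcone ha, hF.one_sub_smul_mem_iff hp hFpos he,
    div_le_iff₀' ha]

lemma smul_one_add_smul_mem_iff (a : ℝ) {b : ℝ} (hb : b < 0) :
    a • (1 : Matrix ι ι ℝ) + b • vecMulVec e e ∈ F ↔ -b ≤ a * p := by
  rcases lt_or_ge 0 a with ha | ha
  · exact hF.smul_one_add_smul_mem_iff_of_pos hp hFcone hFpos he ha b
  refine iff_of_false (fun hmem => ?_) (by nlinarith)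
  -- raising the coefficient of `1` to any `ε > 0` keeps the matrix in `F`, so `-b ≤ ε p`
  obtain ⟨ε, hε, hεp⟩ : ∃ ε : ℝ, 0 < ε ∧ ε * p = -b / 2 :=
    ⟨-b / (2 * p), div_pos (by linarith) (by linarith), by field_simp⟩
  have hshift := hFpos _ hmem _ (PosSemidef.one.smul (sub_nonneg.2 (ha.trans hε.le)))
  rw [show a • (1 : Matrix ι ι ℝ) + b • vecMulVec e e + (ε - a) • 1
      = ε • 1 + b • vecMulVec e e by module,
    hF.smul_one_add_smul_mem_iff_of_pos hp hFcone hFpos he hε] at hshift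
  linarith

end IsRieszCharacteristic

lemma natCast_pos_of_sum_mul_self_eq_one {n : ℕ} {e : Fin n → ℝ} (he : (∑ i, e i * e i) = 1) :
    (0 : ℝ) < n := by
  rcases Nat.eq_zero_or_pos n with rfl | hn
  · simp at he
  · exact_mod_cast hn

lemma phiHomothety_smul_one_add_smul_vecMulVec {n : ℕ} {e : Fin n → ℝ}
    (he : (∑ i, e i * e i) = 1) (r a b : ℝ) :
    PhiHomothety n r (a • 1 + b • vecMulVec e e)
      = (a + (1 - r) * b / n) • 1 + (r * b) • vecMulVec e e := by
  have hn : (n : ℝ) ≠ 0 := (natCast_pos_of_sum_mul_self_eq_one he).ne'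
  have htrace : (a • (1 : Matrix (Fin n) (Fin n) ℝ) + b • vecMulVec e e).trace = a * n + b := by
    simp [trace_add, trace_smul, dotProduct, he]
  rw [PhiHomothety, htrace]
  match_scalars <;> field_simp
  ring

lemma phiHomothety_inv_phiHomothety (n : ℕ) {r : ℝ} (hr : r ≠ 0) (A : Matrix (Fin n) (Fin n) ℝ) :
    PhiHomothety n r⁻¹ (PhiHomothety n r A) = A := by
  rcases Nat.eq_zero_or_pos n with rfl | hn
  · exact Subsingleton.elim _ _
  have hn : (n : ℝ) ≠ 0 := by positivity
  have htrace : (PhiHomothety n r A).trace = A.trace := by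
    simp only [PhiHomothety, trace_add, trace_smul, trace_one, Fintype.card_fin, smul_eq_mul]
    field_simp
    ring
  rw [PhiHomothety, htrace, PhiHomothety]
  match_scalars <;> field_simp
  ring

lemma mem_image_phiHomothety_iff {n : ℕ} {r : ℝ} (hr : r ≠ 0) {F : Set (Matrix (Fin n) (Fin n) ℝ)}
    {X : Matrix (Fin n) (Fin n) ℝ} : X ∈ PhiHomothety n r '' F ↔ PhiHomothety n r⁻¹ X ∈ F := by
  rw [Set.image_eq_preimage_of_inverse (phiHomothety_inv_phiHomothety n hr)]
  · rfl
  · exact fun A => by simpa using phiHomothety_inv_phiHomothety n (inv_ne_zero hr) A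

lemma phiHomothety_one_sub_smul_vecMulVec {n : ℕ} {e : Fin n → ℝ} (he : (∑ i, e i * e i) = 1)
    {δ s : ℝ} (hs : (n : ℝ) + δ * s ≠ 0) :
    PhiHomothety n (1 + δ) (1 - s • vecMulVec e e)
      = ((n + δ * s) / n) • (1 - (n * (1 + δ) * s / (n + δ * s)) • vecMulVec e e) := by
  have hn : (n : ℝ) ≠ 0 := (natCast_pos_of_sum_mul_self_eq_one he).ne'
  rw [sub_eq_add_neg, ← neg_smul, ← one_smul ℝ (1 : Matrix _ _ ℝ),
    phiHomothety_smul_one_add_smul_vecMulVec he]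
  match_scalars <;> field_simp
  ring

lemma IsRieszCharacteristic.image_phiHomothety {n : ℕ} {F : Set (Matrix (Fin n) (Fin n) ℝ)}
    {p : ℝ} (hF : IsRieszCharacteristic F p) (hp : 1 ≤ p)
    (hFcone : ∀ t : ℝ, 0 ≤ t → ∀ A ∈ F, t • A ∈ F)
    (hFpos : ∀ A ∈ F, ∀ P : Matrix (Fin n) (Fin n) ℝ, P.PosSemidef → A + P ∈ F)
    {δ : ℝ} (hδ : 0 ≤ δ) :
    IsRieszCharacteristic (PhiHomothety n (1 + δ) '' F) (n * (1 + δ) * p / (n + δ * p)) := by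
  intro e he t ht
  have hn : (0 : ℝ) < n := natCast_pos_of_sum_mul_self_eq_one he
  have hr : (0 : ℝ) < 1 + δ := by linarith
  have hnp : (0 : ℝ) < n + δ * p := by nlinarith
  rw [one_sub_vecMulVec_sub_smul, mem_image_phiHomothety_iff hr.ne', sub_eq_add_neg, ← neg_smul,
    ← one_smul ℝ (1 : Matrix _ _ ℝ), phiHomothety_smul_one_add_smul_vecMulVec he,
    hF.smul_one_add_smul_mem_iff hp hFcone hFpos he _ (by nlinarith [inv_pos.2 hr]),
    ← sub_nonneg, le_div_iff₀ hnp]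
  have key : (1 + (1 - (1 + δ)⁻¹) * -t / n) * p - -((1 + δ)⁻¹ * -t)
      = (n * (1 + δ) * p - t * (n + δ * p)) / (n * (1 + δ)) := by
    field_simp
    ring
  rw [key, le_div_iff₀ (by positivity), zero_mul, sub_nonneg]

theorem riesz_characteristic_of_elliptic_regularization_general {n : ℕ}
    (F : Set (Matrix (Fin n) (Fin n) ℝ))
    (hFcone : ∀ t : ℝ, 0 ≤ t → ∀ A ∈ F, t • A ∈ F)
    (hFpos : ∀ A ∈ F, ∀ P : Matrix (Fin n) (Fin n) ℝ, P.PosSemidef → A + P ∈ F)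
    (p : ℝ) (hp : 1 ≤ p)
    (hchar : ∀ e : Fin n → ℝ, (∑ i, e i * e i) = 1 → ∀ t : ℝ, 1 ≤ t →
      (((1 : Matrix (Fin n) (Fin n) ℝ) - Matrix.vecMulVec e e)
          - (t - 1) • Matrix.vecMulVec e e ∈ F ↔ t ≤ p))
    (δ : ℝ) (hδ : 0 ≤ δ) :
    (∀ e : Fin n → ℝ, (∑ i, e i * e i) = 1 →
      PhiHomothety n (1 + δ)
          (((1 : Matrix (Fin n) (Fin n) ℝ) - Matrix.vecMulVec e e)
            - (p - 1) • Matrix.vecMulVec e e) =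
        (((n : ℝ) + δ * p) / (n : ℝ)) •
          ((((1 : Matrix (Fin n) (Fin n) ℝ) - Matrix.vecMulVec e e))
            - ((n : ℝ) * (1 + δ) * p / ((n : ℝ) + δ * p) - 1) •
                Matrix.vecMulVec e e)) ∧
    (∀ e : Fin n → ℝ, (∑ i, e i * e i) = 1 → ∀ t : ℝ, 1 ≤ t →
      (((1 : Matrix (Fin n) (Fin n) ℝ) - Matrix.vecMulVec e e)
          - (t - 1) • Matrix.vecMulVec e e ∈ PhiHomothety n (1 + δ) '' F ↔
        t ≤ (n : ℝ) * (1 + δ) * p / ((n : ℝ) + δ * p))) := by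
  refine ⟨fun e he => ?_, IsRieszCharacteristic.image_phiHomothety hchar hp hFcone hFpos hδ⟩
  have hn := natCast_pos_of_sum_mul_self_eq_one he
  simp only [one_sub_vecMulVec_sub_smul]
  exact phiHomothety_one_sub_smul_vecMulVec he (by nlinarith)

/-- If `F` is a cone subequation of Riesz characteristic `p`, its elliptic
regularization `F(δ) = Φ_{1+δ}(F)` has Riesz characteristic
`p' = n(1+δ)p/(n+δp)`; concretely, `Φ_{1+δ}(P_{e⊥} − (p-1) P_e)` is the
positive multiple `((n+δp)/n) (P_{e⊥} − (p'-1) P_e)`. -/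
theorem riesz_characteristic_of_elliptic_regularization {n : ℕ} (hn : 0 < n)
    (F : Set (Matrix (Fin n) (Fin n) ℝ))
    (hFsym : ∀ A ∈ F, A.IsHermitian)
    (hFclosed : IsClosed F)
    (hFcone : ∀ t : ℝ, 0 ≤ t → ∀ A ∈ F, t • A ∈ F)
    (hFpos : ∀ A ∈ F, ∀ P : Matrix (Fin n) (Fin n) ℝ, P.PosSemidef → A + P ∈ F)
    (hFinv : ∀ g : Matrix (Fin n) (Fin n) ℝ, g * gᵀ = 1 → ∀ A ∈ F, g * A * gᵀ ∈ F)
    (p : ℝ) (hp : 1 ≤ p)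
    (hchar : ∀ e : Fin n → ℝ, (∑ i, e i * e i) = 1 → ∀ t : ℝ, 1 ≤ t →
      (((1 : Matrix (Fin n) (Fin n) ℝ) - Matrix.vecMulVec e e)
          - (t - 1) • Matrix.vecMulVec e e ∈ F ↔ t ≤ p))
    (δ : ℝ) (hδ : 0 ≤ δ) :
    (∀ e : Fin n → ℝ, (∑ i, e i * e i) = 1 →
      PhiHomothety n (1 + δ)
          (((1 : Matrix (Fin n) (Fin n) ℝ) - Matrix.vecMulVec e e)
            - (p - 1) • Matrix.vecMulVec e e) =
        (((n : ℝ) + δ * p) / (n : ℝ)) •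
          ((((1 : Matrix (Fin n) (Fin n) ℝ) - Matrix.vecMulVec e e))
            - ((n : ℝ) * (1 + δ) * p / ((n : ℝ) + δ * p) - 1) •
                Matrix.vecMulVec e e)) ∧
    (∀ e : Fin n → ℝ, (∑ i, e i * e i) = 1 → ∀ t : ℝ, 1 ≤ t →
      (((1 : Matrix (Fin n) (Fin n) ℝ) - Matrix.vecMulVec e e)
          - (t - 1) • Matrix.vecMulVec e e ∈ PhiHomothety n (1 + δ) '' F ↔
        t ≤ (n : ℝ) * (1 + δ) * p / ((n : ℝ) + δ * p))) :=
  riesz_characteristic_of_elliptic_regularization_general F hFcone hFpos p hp hchar δ hδ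
end
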